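/- arXiv:2505.03657 — 2 statements merged into one kernel-verified Lean document; each statement's English description precedes it below -/
import Mathlib

section
/- Let (T0, T̃0) be a joint pair of abstract Friedrichs operators on a complex Hilbert space H, let V be a subspace of the graph space W satisfying (V)-boundary conditions, let W2 ⊆ W⁻ be a closed subspace of W with W = V ∔ W2, set W1 := V ∩ W0^⊥ so that W = W0 ∔ W1 ∔ W2 with projections q0, q1, q2, and let M := D∘(q1 − q2). Then ker(D + M) = W0 + W2. -/
open scoped InnerProductSpace
open Filter Topology LinearPMap

noncomputable section

variable {H : Type*} [NormedAddCommGroup H] [InnerProductSpace ℂ H] [CompleteSpace H]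

/-- The inner product used in the paper (antilinear in the **second** entry):
`pInner x y = ⟪y, x⟫` in Mathlib's convention. -/
def pInner {H : Type*} [NormedAddCommGroup H] [InnerProductSpace ℂ H] (x y : H) : ℂ :=
  ⟪y, x⟫_ℂ

/-- A pair of densely defined operators with common domain satisfying conditions (T1) and (T2). -/
structure IsDualPairT12 (T0 T0t : H →ₗ.[ℂ] H) (lam : ℝ) : Prop where
  dom_eq : T0.domain = T0t.domain
  dense' : Dense (T0.domain : Set H)
  sym : ∀ (φ : T0.domain) (ψ : T0t.domain), pInner (T0 φ) (ψ : H) = pInner (φ : H) (T0t ψ)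
  lam_pos : 0 < lam
  bound : ∀ (x : H) (hx : x ∈ T0.domain),
    ‖T0 ⟨x, hx⟩ + T0t ⟨x, dom_eq.le hx⟩‖ ≤ 2 * lam * ‖x‖

/-- A joint pair of abstract Friedrichs operators: (T1), (T2) and (T3). -/
structure IsFriedrichsPair (T0 T0t : H →ₗ.[ℂ] H) (lam mu : ℝ)
    extends IsDualPairT12 T0 T0t lam : Prop where
  mu_pos : 0 < mu
  coercive : ∀ (x : H) (hx : x ∈ T0.domain),
    2 * mu * ‖x‖ ^ 2 ≤ (pInner (T0 ⟨x, hx⟩ + T0t ⟨x, dom_eq.le hx⟩) x).re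

/-- The boundary form `[u|v] := ⟨T₁u , v⟩ − ⟨u , T̃₁v⟩` on the graph space
`W := dom T₁ = dom (T̃₀)*`.  The hypothesis `hW` expresses the fact `dom T₁ = dom T̃₁`. -/
def bform (T0 T0t : H →ₗ.[ℂ] H) (hW : T0t.adjoint.domain = T0.adjoint.domain)
    (u v : T0t.adjoint.domain) : ℂ :=
  pInner (T0t.adjoint u) (v : H) - pInner (u : H) (T0.adjoint ⟨(v : H), hW.le v.2⟩)

/-- `X^[⊥]`, the `[·|·]`-orthogonal complement of `X ⊆ W` in the graph space. -/
def iorth (T0 T0t : H →ₗ.[ℂ] H) (hW : T0t.adjoint.domain = T0.adjoint.domain)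
    (X : Set ↥T0t.adjoint.domain) : Set ↥T0t.adjoint.domain :=
  {u | ∀ v ∈ X, bform T0 T0t hW u v = 0}

/-- `W⁺ = {u ∈ W : [u|u] ≥ 0}`. -/
def Wplus (T0 T0t : H →ₗ.[ℂ] H) (hW : T0t.adjoint.domain = T0.adjoint.domain) :
    Set ↥T0t.adjoint.domain :=
  {u | 0 ≤ (bform T0 T0t hW u u).re}

/-- `W⁻ = {u ∈ W : [u|u] ≤ 0}`. -/
def Wminus (T0 T0t : H →ₗ.[ℂ] H) (hW : T0t.adjoint.domain = T0.adjoint.domain) :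
    Set ↥T0t.adjoint.domain :=
  {u | (bform T0 T0t hW u u).re ≤ 0}

/-- (V)-boundary conditions for a subset `V` of the graph space `W`. -/
def VBC (T0 T0t : H →ₗ.[ℂ] H) (hW : T0t.adjoint.domain = T0.adjoint.domain)
    (V : Set ↥T0t.adjoint.domain) : Prop :=
  V ⊆ Wplus T0 T0t hW ∧ iorth T0 T0t hW V ⊆ Wminus T0 T0t hW ∧
    V = iorth T0 T0t hW (iorth T0 T0t hW V)

/-- The graph norm `‖u‖_{T₁} = ‖u‖ + ‖T₁ u‖` on the graph space. -/
def gnorm (T0t : H →ₗ.[ℂ] H) (u : T0t.adjoint.domain) : ℝ :=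
  ‖(u : H)‖ + ‖T0t.adjoint u‖

/-- The distance associated with the graph norm. -/
def gdist (T0t : H →ₗ.[ℂ] H) (u v : T0t.adjoint.domain) : ℝ := gnorm T0t (u - v)

/-- Closedness (sequential) in the graph-norm topology of `W`. -/
def GClosed (T0t : H →ₗ.[ℂ] H) (X : Set ↥T0t.adjoint.domain) : Prop :=
  ∀ f : ℕ → ↥T0t.adjoint.domain, (∀ n, f n ∈ X) →
    ∀ l, Tendsto (fun n => gdist T0t (f n) l) atTop (𝓝 0) → l ∈ X

/-- `W₀` (the domain of the closure of `T₀`), viewed as a subset of the graph space `W`. -/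
def W0set (T0 T0t : H →ₗ.[ℂ] H) : Set ↥T0t.adjoint.domain :=
  {u | (u : H) ∈ T0.closure.domain}

/-- The graph inner product on `W` (in the paper's convention). -/
def gip (T0t : H →ₗ.[ℂ] H) (u v : ↥T0t.adjoint.domain) : ℂ :=
  pInner (u : H) (v : H) + pInner (T0t.adjoint u) (T0t.adjoint v)

/-- The (Hilbert) orthogonal complement of `W₀` in the graph space. -/
def W0perp (T0 T0t : H →ₗ.[ℂ] H) : Set ↥T0t.adjoint.domain :=
  {u | ∀ v : ↥T0t.adjoint.domain, (v : H) ∈ T0.closure.domain → gip T0t u v = 0}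

/-- `ker T₁` as a subset of the graph space. -/
def kerT1set (T0t : H →ₗ.[ℂ] H) : Set ↥T0t.adjoint.domain := {u | T0t.adjoint u = 0}

/-- `ker T̃₁` as a subset of the graph space. -/
def kerT1tset (T0 T0t : H →ₗ.[ℂ] H) (hW : T0t.adjoint.domain = T0.adjoint.domain) :
    Set ↥T0t.adjoint.domain :=
  {u | T0.adjoint ⟨(u : H), hW.le u.2⟩ = 0}

/-- An operator `M ∈ L(W;W')`, encoded through the pairing `m u v = ⟨Mu, v⟩_{W',W}`
(linear in `u`, antilinear in `v`, and bounded with respect to the graph norm). -/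
structure MOp (T0t : H →ₗ.[ℂ] H) where
  m : ↥T0t.adjoint.domain → ↥T0t.adjoint.domain → ℂ
  add_left : ∀ u v w, m (u + v) w = m u w + m v w
  smul_left : ∀ (c : ℂ) (u w), m (c • u) w = c * m u w
  add_right : ∀ u v w, m u (v + w) = m u v + m u w
  smul_right : ∀ (c : ℂ) (u w), m u (c • w) = starRingEnd ℂ c * m u w
  bounded : ∃ C, ∀ u v, ‖m u v‖ ≤ C * (gnorm T0t u * gnorm T0t v)

/-- The (M)-boundary conditions for a pairing `m u v = ⟨Mu, v⟩_{W',W}`: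
(M1) non-negativity and (M2) `W = ker (D − M) + ker (D + M)`. -/
def MBC (T0 T0t : H →ₗ.[ℂ] H) (hW : T0t.adjoint.domain = T0.adjoint.domain)
    (m : ↥T0t.adjoint.domain → ↥T0t.adjoint.domain → ℂ) : Prop :=
  (∀ u, 0 ≤ (m u u).re) ∧
  (∀ w : ↥T0t.adjoint.domain, ∃ a b : ↥T0t.adjoint.domain,
    (∀ v, bform T0 T0t hW a v = m a v) ∧ (∀ v, bform T0 T0t hW b v + m b v = 0) ∧ w = a + b)

/-- `ker (D − M)` for a pairing `m`. -/
def kerDsubM (T0 T0t : H →ₗ.[ℂ] H) (hW : T0t.adjoint.domain = T0.adjoint.domain)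
    (m : ↥T0t.adjoint.domain → ↥T0t.adjoint.domain → ℂ) : Set ↥T0t.adjoint.domain :=
  {u | ∀ v, bform T0 T0t hW u v = m u v}

/-- `ker (D + M)` for a pairing `m`. -/
def kerDaddM (T0 T0t : H →ₗ.[ℂ] H) (hW : T0t.adjoint.domain = T0.adjoint.domain)
    (m : ↥T0t.adjoint.domain → ↥T0t.adjoint.domain → ℂ) : Set ↥T0t.adjoint.domain :=
  {u | ∀ v, bform T0 T0t hW u v + m u v = 0}

/-!
The boundary form detects `W₀`: `[w|v] = 0` for all `v ∈ W` says that `(w, T₁w)` is orthogonal to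
the graph of `T̃₁ = T₀*` in the skew sense, i.e. that it lies in the double orthogonal of the graph
of `T₀`, which is the graph of its closure. Hence for `u ∈ ker (D + M)`,
`0 = D(u + q₁u − q₂u) = D q₀u + 2 D q₁u = 2 D q₁u` puts `q₁u` in `W₀ ∩ W₀^⊥ = 0`.
Conversely, for `u = a + b` with `a ∈ W₀`, `b ∈ W₂`, the inclusion `W₀ = W^[⊥] ⊆ V^[⊥][⊥] = V` and
`V ∩ W₂ = 0` force `q₁u = 0` and `q₂u = b`, so `(D + M)u = Da = 0`.
-/

namespace LinearPMap

variable {𝕜 E F : Type*} [RCLike 𝕜] [NormedAddCommGroup E] [InnerProductSpace 𝕜 E]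
  [NormedAddCommGroup F] [InnerProductSpace 𝕜 F] [CompleteSpace E] {T : E →ₗ.[𝕜] F}

theorem adjoint_isFormalAdjoint_closure (hT : Dense (T.domain : Set E)) (hc : T.IsClosable) :
    T†.IsFormalAdjoint T.closure := by
  intro y x
  let s : Set (E × F) := {p | ⟪T† y, p.1⟫_𝕜 = ⟪(y : F), p.2⟫_𝕜}
  have hs : _root_.IsClosed s := isClosed_eq (by fun_prop) (by fun_prop)
  have hgraph : (T.graph : Set (E × F)) ⊆ s := by
    intro p hp
    obtain ⟨z, hz1, hz2⟩ := (mem_graph_iff T).1 hp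
    simp only [s, Set.mem_ofPred_eq, ← hz1, ← hz2]
    exact adjoint_isFormalAdjoint hT y z
  have hx : ((x : E), T.closure x) ∈ _root_.closure (T.graph : Set (E × F)) := by
    rw [← Submodule.topologicalClosure_coe, hc.graph_closure_eq_closure_graph]
    exact T.closure.mem_graph x
  exact closure_minimal hgraph hs hx

theorem mem_graph_adjoint_of_mem_orthogonal_graph (hT : Dense (T.domain : Set E))
    {q : WithLp 2 (E × F)}
    (hq : q ∈ (T.graph.comap (WithLp.linearEquiv 2 𝕜 (E × F)).toLinearMap)ᗮ) :
    (q.ofLp.2, -q.ofLp.1) ∈ T†.graph := by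
  rw [adjoint_graph_eq_graph_adjoint hT, Submodule.mem_adjoint_iff]
  intro a b hab
  have hq_ab := (Submodule.mem_orthogonal _ _).1 hq (WithLp.toLp 2 (a, b)) hab
  rw [WithLp.prod_inner_apply] at hq_ab
  simp only [inner_neg_right]
  linear_combination hq_ab

/-- The graph of the closure is the double (skew) orthogonal of the graph: `T̄ = T**`. -/
theorem mem_graph_closure_iff [CompleteSpace F] (hT : Dense (T.domain : Set E))
    (hc : T.IsClosable) (p : E × F) :
    p ∈ T.closure.graph ↔ ∀ y : T†.domain, ⟪T† y, p.1⟫_𝕜 = ⟪(y : F), p.2⟫_𝕜 := by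
  constructor
  · rw [mem_graph_iff]
    rintro ⟨x, hx1, hx2⟩ y
    rw [← hx1, ← hx2]
    exact adjoint_isFormalAdjoint_closure hT hc y x
  intro h
  let G := T.graph.comap (WithLp.linearEquiv 2 𝕜 (E × F)).toLinearMap
  have hp : WithLp.toLp 2 p ∈ Gᗮᗮ := by
    refine (Submodule.mem_orthogonal _ _).2 fun q hq => ?_
    obtain ⟨y, hy1, hy2⟩ := (mem_graph_iff _).1 (mem_graph_adjoint_of_mem_orthogonal_graph hT hq)
    have hy := h y
    rw [hy2, hy1, inner_neg_left] at hy
    rw [WithLp.prod_inner_apply]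
    linear_combination -hy
  rw [Submodule.orthogonal_orthogonal_eq_closure, ← SetLike.mem_coe,
    Submodule.topologicalClosure_coe] at hp
  have hG : (G : Set (WithLp 2 (E × F))) =
      (WithLp.prodContinuousLinearEquiv 2 𝕜 E F).toHomeomorph ⁻¹' (T.graph : Set (E × F)) := rfl
  rw [hG, ← Homeomorph.preimage_closure] at hp
  rw [← hc.graph_closure_eq_closure_graph, ← SetLike.mem_coe, Submodule.topologicalClosure_coe]
  exact hp

end LinearPMap

section Friedrichs

variable {T0 T0t : H →ₗ.[ℂ] H} {lam : ℝ}

namespace IsDualPairT12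

theorem le_adjoint (hF : IsDualPairT12 T0 T0t lam) : T0 ≤ T0t† :=
  IsFormalAdjoint.le_adjoint (hF.dom_eq ▸ hF.dense') fun x y => (hF.sym y x).symm

theorem isClosable (hF : IsDualPairT12 T0 T0t lam) : T0.IsClosable :=
  (adjoint_isClosed (hF.dom_eq ▸ hF.dense')).isClosable.leIsClosable hF.le_adjoint

theorem closure_le_adjoint (hF : IsDualPairT12 T0 T0t lam) : T0.closure ≤ T0t† := by
  refine le_of_le_graph ?_
  rw [← hF.isClosable.graph_closure_eq_closure_graph]
  exact Submodule.topologicalClosure_minimal _ (le_graph_of_le hF.le_adjoint)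
    (adjoint_isClosed (hF.dom_eq ▸ hF.dense'))

theorem bform_eq_zero_iff_mem_W0set (hF : IsDualPairT12 T0 T0t lam)
    (hW : T0t†.domain = T0†.domain) (u : T0t†.domain) :
    (∀ v, bform T0 T0t hW u v = 0) ↔ u ∈ W0set T0 T0t := by
  have hW0 : u ∈ W0set T0 T0t ↔ ((u : H), T0t† u) ∈ T0.closure.graph := by
    rw [mem_graph_iff]
    constructor
    · intro hu
      exact ⟨⟨u, hu⟩, rfl, hF.closure_le_adjoint.2 rfl⟩
    · rintro ⟨y, hy, -⟩
      rw [W0set, Set.mem_ofPred_eq, ← show (y : H) = u from hy]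
      exact y.2
  rw [hW0, mem_graph_closure_iff hF.dense' hF.isClosable]
  constructor
  · intro h y
    exact (sub_eq_zero.1 (h ⟨y, hW.ge y.2⟩)).symm
  · intro h v
    exact sub_eq_zero.2 (h ⟨v, hW.le v.2⟩).symm

end IsDualPairT12

variable (hW : T0t†.domain = T0†.domain)

theorem bform_add_left (u u' v : T0t†.domain) :
    bform T0 T0t hW (u + u') v = bform T0 T0t hW u v + bform T0 T0t hW u' v := by
  simp only [bform, pInner, LinearPMap.map_add, Submodule.coe_add, inner_add_right]
  ring

theorem bform_neg_left (u v : T0t†.domain) :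
    bform T0 T0t hW (-u) v = -bform T0 T0t hW u v := by
  simp only [bform, pInner, LinearPMap.map_neg, Submodule.coe_neg, inner_neg_right]
  ring

theorem bform_sub_left (u u' v : T0t†.domain) :
    bform T0 T0t hW (u - u') v = bform T0 T0t hW u v - bform T0 T0t hW u' v := by
  rw [sub_eq_add_neg, bform_add_left, bform_neg_left, ← sub_eq_add_neg]

theorem sub_mem_W0set {u u' : T0t†.domain} (hu : u ∈ W0set T0 T0t) (hu' : u' ∈ W0set T0 T0t) :
    u - u' ∈ W0set T0 T0t := by
  simp only [W0set, Set.mem_ofPred_eq, Submodule.coe_sub] at hu hu' ⊢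
  exact sub_mem hu hu'

theorem eq_zero_of_mem_W0set_of_mem_W0perp {u : T0t†.domain} (hu : u ∈ W0set T0 T0t)
    (hu' : u ∈ W0perp T0 T0t) : u = 0 := by
  have h := congrArg RCLike.re (hu' u hu)
  simp only [gip, pInner, _root_.map_add, _root_.map_zero] at h
  exact Subtype.ext <| (re_inner_self_nonpos (𝕜 := ℂ)).1 <| by
    linarith [inner_self_nonneg (𝕜 := ℂ) (x := T0t† u)]

theorem W0set_subset_of_VBC (hF : IsDualPairT12 T0 T0t lam) {V : Set T0t†.domain}
    (hV : VBC T0 T0t hW V) : W0set T0 T0t ⊆ V := by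
  intro u hu
  rw [hV.2.2]
  exact fun v _ => (hF.bform_eq_zero_iff_mem_W0set hW u).2 hu v

/-- Uniqueness of the `W₀ ∔ (V ∩ W₀^⊥) ∔ W₂` decomposition of an element of `W₀ + W₂`. -/
theorem eq_zero_and_eq_of_add_add_eq (hF : IsDualPairT12 T0 T0t lam)
    {V W2 : Submodule ℂ T0t†.domain} (hV : VBC T0 T0t hW (V : Set _)) (hdisj : V ⊓ W2 = ⊥)
    {a b s t r : T0t†.domain} (ha : a ∈ W0set T0 T0t) (hb : b ∈ W2) (hs : s ∈ W0set T0 T0t)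
    (htV : t ∈ V) (htperp : t ∈ W0perp T0 T0t) (hr : r ∈ W2) (h : s + t + r = a + b) :
    t = 0 ∧ r = b := by
  have has : a - s ∈ W0set T0 T0t := sub_mem_W0set ha hs
  have hbr : b - r = t - (a - s) :=
    calc b - r = (a + b) - a - r := by abel
      _ = (s + t + r) - a - r := by rw [h]
      _ = t - (a - s) := by abel
  have hbrV : b - r ∈ V ⊓ W2 :=
    ⟨hbr ▸ V.sub_mem htV (W0set_subset_of_VBC hW hF hV has), W2.sub_mem hb hr⟩
  rw [hdisj, Submodule.mem_bot, sub_eq_zero] at hbrV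
  have hta : t = a - s := by rw [← sub_eq_zero, ← hbr, hbrV, sub_self]
  exact ⟨eq_zero_of_mem_W0set_of_mem_W0perp (hta ▸ has) htperp, hbrV.symm⟩

end Friedrichs

theorem kerDaddM_eq_W0_add_W2_general
    (T0 T0t : H →ₗ.[ℂ] H) (lam mu : ℝ) (hF : IsFriedrichsPair T0 T0t lam mu)
    (hW : T0t.adjoint.domain = T0.adjoint.domain)
    (V : Submodule ℂ ↥T0t.adjoint.domain) (hV : VBC T0 T0t hW (V : Set _))
    (W2 : Submodule ℂ ↥T0t.adjoint.domain)
    (hdisj : V ⊓ W2 = ⊥)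
    (q0 q1 q2 : ↥T0t.adjoint.domain →ₗ[ℂ] ↥T0t.adjoint.domain)
    (hq : ∀ u, q0 u ∈ W0set T0 T0t ∧ q1 u ∈ (V : Set _) ∩ W0perp T0 T0t ∧
      q2 u ∈ W2 ∧ q0 u + q1 u + q2 u = u) :
    kerDaddM T0 T0t hW (fun u v => bform T0 T0t hW (q1 u - q2 u) v) =
      {u : ↥T0t.adjoint.domain | ∃ a ∈ W0set T0 T0t, ∃ b ∈ (W2 : Set _), u = a + b} := by
  have hD := hF.toIsDualPairT12
  have hD0 := fun {a} (ha : a ∈ W0set T0 T0t) => (hD.bform_eq_zero_iff_mem_W0set hW a).2 ha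
  ext u
  constructor
  · intro hker
    obtain ⟨h0, ⟨-, h1perp⟩, h2, hsum⟩ := hq u
    have hDq1 : ∀ v, bform T0 T0t hW (q1 u) v = 0 := fun v => by
      have hDu : bform T0 T0t hW u v = bform T0 T0t hW (q1 u) v + bform T0 T0t hW (q2 u) v :=
        calc bform T0 T0t hW u v = bform T0 T0t hW (q0 u + q1 u + q2 u) v := by rw [hsum]
          _ = _ := by rw [bform_add_left, bform_add_left, hD0 h0, zero_add]
      have hk : bform T0 T0t hW u v + bform T0 T0t hW (q1 u - q2 u) v = 0 := hker v
      rw [hDu, bform_sub_left] at hk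
      linear_combination hk / 2
    have hq1 : q1 u = 0 :=
      eq_zero_of_mem_W0set_of_mem_W0perp ((hD.bform_eq_zero_iff_mem_W0set hW _).1 hDq1) h1perp
    exact ⟨q0 u, h0, q2 u, h2, by simpa [hq1] using hsum.symm⟩
  · rintro ⟨a, ha, b, hb, rfl⟩ v
    obtain ⟨h0, ⟨h1V, h1perp⟩, h2, hsum⟩ := hq (a + b)
    obtain ⟨hq1, hq2⟩ := eq_zero_and_eq_of_add_add_eq hW hD hV hdisj ha hb h0 h1V h1perp h2 hsum
    show bform T0 T0t hW (a + b) v + bform T0 T0t hW (q1 (a + b) - q2 (a + b)) v = 0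
    rw [hq1, hq2, zero_sub, bform_add_left, bform_neg_left, hD0 ha]
    ring

/-- Remark 5.4(i): with `M = D(q₁ − q₂)` constructed from a decomposition
`W = W₀ ∔ (V ∩ W₀^⊥) ∔ W₂` as in Theorem 5.1(i), one has `ker (D + M) = W₀ + W₂`. -/
theorem kerDaddM_eq_W0_add_W2
    (T0 T0t : H →ₗ.[ℂ] H) (lam mu : ℝ) (hF : IsFriedrichsPair T0 T0t lam mu)
    (hW : T0t.adjoint.domain = T0.adjoint.domain)
    (V : Submodule ℂ ↥T0t.adjoint.domain) (hV : VBC T0 T0t hW (V : Set _))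
    (W2 : Submodule ℂ ↥T0t.adjoint.domain)
    (hW2closed : GClosed T0t (W2 : Set _)) (hW2neg : (W2 : Set _) ⊆ Wminus T0 T0t hW)
    (hdisj : V ⊓ W2 = ⊥) (hspan : V ⊔ W2 = ⊤)
    (q0 q1 q2 : ↥T0t.adjoint.domain →ₗ[ℂ] ↥T0t.adjoint.domain)
    (hq : ∀ u, q0 u ∈ W0set T0 T0t ∧ q1 u ∈ (V : Set _) ∩ W0perp T0 T0t ∧
      q2 u ∈ W2 ∧ q0 u + q1 u + q2 u = u) :
    kerDaddM T0 T0t hW (fun u v => bform T0 T0t hW (q1 u - q2 u) v) =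
      {u : ↥T0t.adjoint.domain | ∃ a ∈ W0set T0 T0t, ∃ b ∈ (W2 : Set _), u = a + b} :=
  kerDaddM_eq_W0_add_W2_general T0 T0t lam mu hF hW V hV W2 hdisj q0 q1 q2 hq
end
end

section
/- Let (T0, T̃0) be a joint pair of abstract Friedrichs operators on a complex Hilbert space H. If a subspace V of the graph space W satisfies (V)-boundary conditions, then V is maximal non-negative in (W, [·|·]), i.e. V ⊆ W⁺ and no subspace of W contained in W⁺ properly contains V; moreover V^[⊥] is maximal non-positive, i.e. V^[⊥] ⊆ W⁻ and no subspace of W contained in W⁻ properly contains V^[⊥]. -/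
open scoped InnerProductSpace
open Filter Topology LinearPMap

noncomputable section

variable {H : Type*} [NormedAddCommGroup H] [InnerProductSpace ℂ H] [CompleteSpace H]

/-!
The operator `T₀ + T̃₀` is bounded on the dense domain, so it extends to a bounded operator on `H`,
which coincides with `T₁ + T̃₁` on `W` and is coercive by (T3). Since
`Re [u|u] = Re ⟨T₁u, u⟩ - Re ⟨T̃₁u, u⟩`, this gives `μ‖u‖ ≤ ‖T₁u‖` on `W⁺` and `μ‖u‖ ≤ ‖T̃₁u‖`
on `W⁻`. Hence `T₁` has closed range on `V ⊆ W⁺` and `T̃₁` on `V^[⊥] ⊆ W⁻`, because the adjoint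
`T₁ = T̃₀*` has a closed graph and `[·|·]`-orthogonal complements are closed under graph limits.
The ranges are also dense: the domain of `T₀` lies in both `V` and `V^[⊥]`, so a vector orthogonal
to `T₁(V)` lies in `ker T̃₁ ∩ V^[⊥] ⊆ ker T̃₁ ∩ W⁻ = 0`, and symmetrically for `T̃₁(V^[⊥])`.
Thus `T₁ : V → H` is onto. If `U ⊇ V` is non-negative and `u ∈ U`, pick `v ∈ V` with
`T₁v = T₁u`; then `u - v ∈ U ⊆ W⁺` lies in `ker T₁`, so `u = v`. The same argument with `T̃₁`
shows that `V^[⊥]` is maximal non-positive.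
-/

section Hilbert

variable {𝕜 E : Type*} [RCLike 𝕜] [NormedAddCommGroup E] [InnerProductSpace 𝕜 E]

theorem Submodule.eq_top_of_isClosed_of_orthogonal_eq_bot [CompleteSpace E] {K : Submodule 𝕜 E}
    (hK : IsClosed (K : Set E)) (h : Kᗮ = ⊥) : K = ⊤ := by
  rw [← hK.submodule_topologicalClosure_eq, ← Submodule.orthogonal_orthogonal_eq_closure, h,
    Submodule.bot_orthogonal_eq_top]

theorem mul_norm_le_norm_of_mul_sq_le_re_inner {μ : ℝ} {a x : E}
    (h : μ * ‖x‖ ^ 2 ≤ RCLike.re ⟪a, x⟫_𝕜) : μ * ‖x‖ ≤ ‖a‖ := by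
  rcases (norm_nonneg x).eq_or_lt with hx | hx
  · rw [← hx, mul_zero]
    exact norm_nonneg a
  · refine le_of_mul_le_mul_right ?_ hx
    calc μ * ‖x‖ * ‖x‖ = μ * ‖x‖ ^ 2 := by ring
      _ ≤ RCLike.re ⟪a, x⟫_𝕜 := h
      _ ≤ ‖a‖ * ‖x‖ := re_inner_le_norm a x

theorem LinearPMap.exists_adjoint_eq_zero {F : Type*} [NormedAddCommGroup F]
    [InnerProductSpace 𝕜 F] [CompleteSpace E] {T : E →ₗ.[𝕜] F} (hT : Dense (T.domain : Set E))
    {y : F} (hy : ∀ x : T.domain, ⟪T x, y⟫_𝕜 = 0) :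
    ∃ hy' : y ∈ T†.domain, T† ⟨y, hy'⟩ = 0 := by
  have hy0 : ∀ x : T.domain, ⟪(0 : E), x⟫_𝕜 = ⟪y, T x⟫_𝕜 := fun x => by
    rw [inner_zero_left, ← inner_conj_symm, hy, _root_.map_zero]
  exact ⟨mem_adjoint_domain_of_exists y ⟨0, hy0⟩, adjoint_apply_eq hT _ hy0⟩

end Hilbert

theorem LinearPMap.IsClosed.mem_graph_of_tendsto {R E F : Type*} [CommRing R] [AddCommGroup E]
    [Module R E] [TopologicalSpace E] [AddCommGroup F] [Module R F] [TopologicalSpace F]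
    {f : E →ₗ.[R] F} (hf : f.IsClosed) {u : ℕ → f.domain} {x : E} {y : F}
    (hx : Tendsto (fun n => (u n : E)) atTop (𝓝 x)) (hy : Tendsto (fun n => f (u n)) atTop (𝓝 y)) :
    (x, y) ∈ f.graph :=
  IsClosed.mem_of_tendsto hf (hx.prodMk_nhds hy) (Eventually.of_forall fun n => f.mem_graph (u n))

theorem cauchySeq_of_norm_sub_le_mul {E F : Type*} [SeminormedAddCommGroup E]
    [SeminormedAddCommGroup F] {f : ℕ → E} {g : ℕ → F} {C : ℝ}
    (h : ∀ n m, ‖g n - g m‖ ≤ C * ‖f n - f m‖) (hf : CauchySeq f) : CauchySeq g := by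
  simp only [cauchySeq_iff_tendsto_dist_atTop_0, dist_eq_norm] at hf ⊢
  exact squeeze_zero (fun _ => norm_nonneg _) (fun p => h p.1 p.2) (by simpa using hf.const_mul C)

theorem Submodule.isClosed_map_of_forall_tendsto {R E G F : Type*} [Ring R] [AddCommGroup E]
    [Module R E] [NormedAddCommGroup G] [Module R G] [CompleteSpace G] [NormedAddCommGroup F]
    [Module R F] (ι : E →ₗ[R] G) (A : E →ₗ[R] F) (V : Submodule R E) {μ : ℝ} (hμ : 0 < μ)
    (hbelow : ∀ u ∈ V, μ * ‖ι u‖ ≤ ‖A u‖)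
    (hlim : ∀ (u : ℕ → E) (x : G) (y : F), (∀ n, u n ∈ V) →
      Tendsto (fun n => ι (u n)) atTop (𝓝 x) → Tendsto (fun n => A (u n)) atTop (𝓝 y) →
      y ∈ V.map A) :
    IsClosed (V.map A : Set F) := by
  refine IsSeqClosed.isClosed fun g y hg hgy => ?_
  choose u hu hAu using fun n => Submodule.mem_map.mp (hg n)
  have hcauchy : CauchySeq fun n => ι (u n) := by
    refine cauchySeq_of_norm_sub_le_mul (C := μ⁻¹) (fun n m => ?_) hgy.cauchySeq
    rw [← hAu n, ← hAu m, ← _root_.map_sub, ← _root_.map_sub, le_inv_mul_iff₀ hμ]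
    exact hbelow _ (V.sub_mem (hu n) (hu m))
  obtain ⟨x, hx⟩ := cauchySeq_tendsto_of_complete hcauchy
  exact hlim u x y hu hx (by simpa only [hAu] using hgy)

theorem Submodule.eq_of_le_of_map_le_of_disjoint_ker {R E F : Type*} [Ring R] [AddCommGroup E]
    [Module R E] [AddCommGroup F] [Module R F] {V U : Submodule R E} (A : E →ₗ[R] F)
    (hVU : V ≤ U) (hmap : U.map A ≤ V.map A) (hker : Disjoint U (LinearMap.ker A)) : U = V := by
  refine le_antisymm (fun u hu => ?_) hVU
  obtain ⟨v, hv, hAv⟩ := hmap (Submodule.mem_map_of_mem hu)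
  have : u - v = 0 := Submodule.disjoint_def.mp hker _ (U.sub_mem hu (hVU hv))
    (by rw [LinearMap.mem_ker, _root_.map_sub, hAv, sub_self])
  rwa [sub_eq_zero.mp this]

namespace IsDualPairT12

variable {T0 T0t : H →ₗ.[ℂ] H} {lam : ℝ} (hF : IsDualPairT12 T0 T0t lam)
include hF

omit [CompleteSpace H] in
theorem dense_domain_t : Dense (T0t.domain : Set H) := hF.dom_eq ▸ hF.dense'

omit [CompleteSpace H] in
theorem isFormalAdjoint : T0t.IsFormalAdjoint T0 := fun ψ φ => (hF.sym φ ψ).symm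

theorem le_adjoint_t : T0 ≤ T0t† := hF.isFormalAdjoint.le_adjoint hF.dense_domain_t

theorem t_le_adjoint : T0t ≤ T0† := hF.isFormalAdjoint.symm.le_adjoint hF.dense'

def sumOnDomain : T0.domain →L[ℂ] H :=
  (T0.toFun + T0t.toFun ∘ₗ Submodule.inclusion hF.dom_eq.le).mkContinuous (2 * lam)
    fun x => hF.bound x x.2

def sumCLM : H →L[ℂ] H :=
  hF.sumOnDomain.extend T0.domain.subtypeL

theorem sumCLM_apply_domain (φ : T0.domain) :
    hF.sumCLM φ = T0 φ + T0t (Submodule.inclusion hF.dom_eq.le φ) :=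
  ContinuousLinearMap.extend_eq _ hF.dense'.denseRange_val (isUniformInducing_val _) φ

theorem sumCLM_isSymmetric : (hF.sumCLM : H →ₗ[ℂ] H).IsSymmetric := by
  intro x y
  refine DenseRange.induction_on₂ (p := fun x y => ⟪hF.sumCLM x, y⟫_ℂ = ⟪x, hF.sumCLM y⟫_ℂ)
    hF.dense'.denseRange_val (isClosed_eq (by fun_prop) (by fun_prop)) (fun φ ψ => ?_) x y
  rw [hF.sumCLM_apply_domain, hF.sumCLM_apply_domain, inner_add_left, inner_add_right, add_comm]
  exact congrArg₂ (· + ·) (hF.isFormalAdjoint _ ψ)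
    (hF.isFormalAdjoint.symm φ (Submodule.inclusion hF.dom_eq.le ψ))

end IsDualPairT12

def T1t (T0 T0t : H →ₗ.[ℂ] H) (hW : T0t†.domain = T0†.domain) : T0t†.domain →ₗ[ℂ] H :=
  T0†.toFun ∘ₗ Submodule.inclusion hW.le

section BoundaryForm

variable {T0 T0t : H →ₗ.[ℂ] H} (hW : T0t†.domain = T0†.domain)

theorem bform_eq_inner (u v : T0t†.domain) :
    bform T0 T0t hW u v = ⟪(v : H), T0t† u⟫_ℂ - ⟪T1t T0 T0t hW v, (u : H)⟫_ℂ := rfl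

theorem re_bform_self (u : T0t†.domain) :
    (bform T0 T0t hW u u).re = (⟪T0t† u, (u : H)⟫_ℂ).re - (⟪T1t T0 T0t hW u, (u : H)⟫_ℂ).re := by
  rw [bform_eq_inner, Complex.sub_re]
  congr 1
  exact inner_re_symm (𝕜 := ℂ) _ _

def iorthSubmodule (X : Set T0t†.domain) : Submodule ℂ T0t†.domain where
  carrier := iorth T0 T0t hW X
  zero_mem' v _ := by simp [bform_eq_inner]
  add_mem' {u w} hu hw v hv := by
    have h := congrArg₂ (· + ·) (hu v hv) (hw v hv)
    simp only [bform_eq_inner, LinearPMap.map_add, Submodule.coe_add, inner_add_right] at h ⊢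
    linear_combination h
  smul_mem' c u hu v hv := by
    have h := hu v hv
    simp only [bform_eq_inner, LinearPMap.map_smul, Submodule.coe_smul, inner_smul_right] at h ⊢
    linear_combination c * h

variable {lam : ℝ} (hF : IsDualPairT12 T0 T0t lam)
include hF

theorem IsDualPairT12.sumCLM_apply_graph (u : T0t†.domain) :
    hF.sumCLM u = T0t† u + T1t T0 T0t hW u := by
  refine hF.dense'.eq_of_inner_left ℂ fun ψ hψ => ?_
  set φ : T0.domain := ⟨ψ, hψ⟩
  calc ⟪hF.sumCLM u, ψ⟫_ℂ = ⟪(u : H), hF.sumCLM φ⟫_ℂ := hF.sumCLM_isSymmetric _ _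
    _ = ⟪(u : H), T0 φ + T0t (Submodule.inclusion hF.dom_eq.le φ)⟫_ℂ := by
      rw [hF.sumCLM_apply_domain]
    _ = ⟪T0t† u + T1t T0 T0t hW u, ψ⟫_ℂ := by
      rw [inner_add_right, inner_add_left, add_comm]
      exact congrArg₂ (· + ·) (T0t.adjoint_isFormalAdjoint hF.dense_domain_t u _).symm
        (T0.adjoint_isFormalAdjoint hF.dense' (Submodule.inclusion hW.le u) φ).symm

theorem bform_conj (u v : T0t†.domain) :
    bform T0 T0t hW u v = starRingEnd ℂ (bform T0 T0t hW v u) := by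
  have h := hF.sumCLM_isSymmetric v u
  simp only [ContinuousLinearMap.coe_coe, hF.sumCLM_apply_graph hW, inner_add_left,
    inner_add_right] at h
  rw [bform_eq_inner, bform_eq_inner, _root_.map_sub, inner_conj_symm, inner_conj_symm]
  linear_combination -h

theorem IsDualPairT12.adjoint_t_inclusion (φ : T0.domain) :
    T0t† (Submodule.inclusion hF.le_adjoint_t.1 φ) = T0 φ :=
  (hF.le_adjoint_t.2 rfl).symm

theorem IsDualPairT12.T1t_inclusion (φ : T0.domain) :
    T1t T0 T0t hW (Submodule.inclusion hF.le_adjoint_t.1 φ)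
      = T0t (Submodule.inclusion hF.dom_eq.le φ) :=
  (hF.t_le_adjoint.2 rfl).symm

theorem inclusion_mem_iorth (X : Set T0t†.domain) (φ : T0.domain) :
    Submodule.inclusion hF.le_adjoint_t.1 φ ∈ iorth T0 T0t hW X := fun v _ => by
  rw [bform_eq_inner, hF.adjoint_t_inclusion, sub_eq_zero]
  exact (T0.adjoint_isFormalAdjoint hF.dense' (Submodule.inclusion hW.le v) φ).symm

end BoundaryForm

section Coercivity

variable {T0 T0t : H →ₗ.[ℂ] H} {lam mu : ℝ} (hF : IsFriedrichsPair T0 T0t lam mu)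
  (hW : T0t†.domain = T0†.domain)
include hF

theorem IsFriedrichsPair.coercive_sumCLM (x : H) :
    2 * mu * ‖x‖ ^ 2 ≤ (⟪hF.sumCLM x, x⟫_ℂ).re := by
  refine hF.dense'.induction (fun x hx => ?_) (isClosed_le (by fun_prop) (by fun_prop)) x
  rw [hF.sumCLM_apply_domain ⟨x, hx⟩, ← Complex.conj_re, inner_conj_symm]
  exact hF.coercive x hx

theorem IsFriedrichsPair.coercive_graph (u : T0t†.domain) :
    2 * mu * ‖(u : H)‖ ^ 2 ≤ (⟪T0t† u, (u : H)⟫_ℂ).re + (⟪T1t T0 T0t hW u, (u : H)⟫_ℂ).re := by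
  simpa only [hF.sumCLM_apply_graph hW, inner_add_left, Complex.add_re]
    using hF.coercive_sumCLM u

theorem mu_mul_norm_le_of_mem_Wplus {u : T0t†.domain} (hu : u ∈ Wplus T0 T0t hW) :
    mu * ‖(u : H)‖ ≤ ‖T0t† u‖ := by
  refine mul_norm_le_norm_of_mul_sq_le_re_inner (𝕜 := ℂ) ?_
  rw [RCLike.re_to_complex]
  have h₁ := hF.coercive_graph hW u
  have h₂ := re_bform_self hW u
  have h₃ : 0 ≤ (bform T0 T0t hW u u).re := hu
  linarith

theorem mu_mul_norm_le_of_mem_Wminus {u : T0t†.domain} (hu : u ∈ Wminus T0 T0t hW) :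
    mu * ‖(u : H)‖ ≤ ‖T1t T0 T0t hW u‖ := by
  refine mul_norm_le_norm_of_mul_sq_le_re_inner (𝕜 := ℂ) ?_
  rw [RCLike.re_to_complex]
  have h₁ := hF.coercive_graph hW u
  have h₂ := re_bform_self hW u
  have h₃ : (bform T0 T0t hW u u).re ≤ 0 := hu
  linarith

theorem eq_zero_of_mem_Wplus_of_adjoint_eq_zero {u : T0t†.domain} (hu : u ∈ Wplus T0 T0t hW)
    (h : T0t† u = 0) : u = 0 := by
  have hle := mu_mul_norm_le_of_mem_Wplus hF hW hu
  rw [h, norm_zero] at hle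
  exact Submodule.coe_eq_zero.mp (norm_le_zero_iff.mp (nonpos_of_mul_nonpos_right hle hF.mu_pos))

theorem eq_zero_of_mem_Wminus_of_T1t_eq_zero {u : T0t†.domain} (hu : u ∈ Wminus T0 T0t hW)
    (h : T1t T0 T0t hW u = 0) : u = 0 := by
  have hle := mu_mul_norm_le_of_mem_Wminus hF hW hu
  rw [h, norm_zero] at hle
  exact Submodule.coe_eq_zero.mp (norm_le_zero_iff.mp (nonpos_of_mul_nonpos_right hle hF.mu_pos))

end Coercivity

section Surjectivity

variable {T0 T0t : H →ₗ.[ℂ] H} {lam mu : ℝ} (hF : IsFriedrichsPair T0 T0t lam mu)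
  (hW : T0t†.domain = T0†.domain)

theorem mem_iorth_of_tendsto {X : Set T0t†.domain} {u : ℕ → T0t†.domain}
    (hu : ∀ n, u n ∈ iorth T0 T0t hW X) {x : T0t†.domain}
    (hx : Tendsto (fun n => (u n : H)) atTop (𝓝 x))
    (hT : Tendsto (fun n => T0t† (u n)) atTop (𝓝 (T0t† x))) : x ∈ iorth T0 T0t hW X :=
  fun v hv => by
    have hlim : Tendsto (fun n => bform T0 T0t hW (u n) v) atTop (𝓝 (bform T0 T0t hW x v)) :=
      (tendsto_const_nhds.inner hT).sub (tendsto_const_nhds.inner hx)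
    exact tendsto_nhds_unique hlim (tendsto_const_nhds.congr fun n => (hu n v hv).symm)

include hF

theorem isClosed_map_adjoint {V : Submodule ℂ T0t†.domain} {X : Set T0t†.domain}
    (hplus : (V : Set T0t†.domain) ⊆ Wplus T0 T0t hW)
    (hVX : (V : Set T0t†.domain) = iorth T0 T0t hW X) :
    IsClosed (V.map T0t†.toFun : Set H) := by
  refine Submodule.isClosed_map_of_forall_tendsto T0t†.domain.subtype T0t†.toFun V hF.mu_pos
    (fun u hu => mu_mul_norm_le_of_mem_Wplus hF hW (hplus hu)) fun u x y hu hx hy => ?_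
  obtain ⟨x', rfl, hx'⟩ := T0t†.mem_graph_iff.mp
    ((adjoint_isClosed hF.dense_domain_t).mem_graph_of_tendsto hx hy)
  refine ⟨x', hVX.superset ?_, hx'⟩
  exact mem_iorth_of_tendsto hW (fun n => hVX.subset (hu n)) hx (hx' ▸ hy)

theorem isClosed_map_T1t {X : Set T0t†.domain}
    (hminus : iorth T0 T0t hW X ⊆ Wminus T0 T0t hW) :
    IsClosed ((iorthSubmodule hW X).map (T1t T0 T0t hW) : Set H) := by
  refine Submodule.isClosed_map_of_forall_tendsto T0t†.domain.subtype (T1t T0 T0t hW) _ hF.mu_pos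
    (fun u hu => mu_mul_norm_le_of_mem_Wminus hF hW (hminus hu)) fun u x y hu hx hy => ?_
  -- `T₁ = sumCLM - T̃₁` on `W`, so the `T₁`-images converge as well.
  have hT : Tendsto (fun n => T0t† (u n)) atTop (𝓝 (hF.sumCLM x - y)) := by
    simpa only [Function.comp_def, Submodule.subtype_apply, hF.sumCLM_apply_graph hW,
      add_sub_cancel_right] using ((hF.sumCLM.continuous.tendsto x).comp hx).sub hy
  obtain ⟨x', rfl, hx'⟩ := T0t†.mem_graph_iff.mp
    ((adjoint_isClosed hF.dense_domain_t).mem_graph_of_tendsto hx hT)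
  refine ⟨x', mem_iorth_of_tendsto hW hu hx (hx' ▸ hT), ?_⟩
  rwa [hF.sumCLM_apply_graph hW, add_sub_assoc, left_eq_add, sub_eq_zero] at hx'

theorem orthogonal_map_adjoint_eq_bot {V : Submodule ℂ T0t†.domain} {X : Set T0t†.domain}
    (hVX : (V : Set T0t†.domain) = iorth T0 T0t hW X)
    (hminus : iorth T0 T0t hW V ⊆ Wminus T0 T0t hW) :
    (V.map T0t†.toFun)ᗮ = ⊥ := by
  refine (Submodule.eq_bot_iff _).mpr fun h hh => ?_
  have hT0 : ∀ φ : T0.domain, ⟪T0 φ, h⟫_ℂ = 0 := fun φ => by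
    rw [← hF.adjoint_t_inclusion]
    exact Submodule.inner_right_of_mem_orthogonal
      (Submodule.mem_map_of_mem (hVX.superset (inclusion_mem_iorth hW hF.toIsDualPairT12 X φ))) hh
  obtain ⟨hmem, h0⟩ := LinearPMap.exists_adjoint_eq_zero hF.dense' hT0
  have hw : ⟨h, hW.ge hmem⟩ ∈ iorth T0 T0t hW V := fun v hv => by
    have hv' : ⟪h, T0t† v⟫_ℂ = 0 :=
      Submodule.inner_left_of_mem_orthogonal (Submodule.mem_map_of_mem hv) hh
    rw [bform_conj hW hF.toIsDualPairT12, bform_eq_inner, show T1t T0 T0t hW ⟨h, _⟩ = 0 from h0,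
      inner_zero_left, sub_zero]
    exact (congrArg (starRingEnd ℂ) hv').trans (_root_.map_zero _)
  exact congrArg Subtype.val (eq_zero_of_mem_Wminus_of_T1t_eq_zero hF hW (hminus hw) h0)

theorem orthogonal_map_T1t_eq_bot {V : Submodule ℂ T0t†.domain}
    (hplus : (V : Set T0t†.domain) ⊆ Wplus T0 T0t hW)
    (hVX : (V : Set T0t†.domain) = iorth T0 T0t hW (iorth T0 T0t hW V)) :
    ((iorthSubmodule hW V).map (T1t T0 T0t hW))ᗮ = ⊥ := by
  refine (Submodule.eq_bot_iff _).mpr fun h hh => ?_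
  have hT0t : ∀ ψ : T0t.domain, ⟪T0t ψ, h⟫_ℂ = 0 := fun ψ => by
    have := Submodule.inner_right_of_mem_orthogonal (Submodule.mem_map_of_mem
      (inclusion_mem_iorth hW hF.toIsDualPairT12 V (Submodule.inclusion hF.dom_eq.ge ψ))) hh
    rwa [hF.T1t_inclusion] at this
  obtain ⟨hmem, h0⟩ := LinearPMap.exists_adjoint_eq_zero hF.dense_domain_t hT0t
  have hw : ⟨h, hmem⟩ ∈ V := hVX.superset fun z hz => by
    rw [bform_eq_inner, h0, inner_zero_right, zero_sub, neg_eq_zero]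
    exact Submodule.inner_right_of_mem_orthogonal (Submodule.mem_map_of_mem hz) hh
  exact congrArg Subtype.val (eq_zero_of_mem_Wplus_of_adjoint_eq_zero hF hW (hplus hw) h0)

theorem map_adjoint_eq_top {V : Submodule ℂ T0t†.domain}
    (hV : VBC T0 T0t hW (V : Set T0t†.domain)) : V.map T0t†.toFun = ⊤ :=
  Submodule.eq_top_of_isClosed_of_orthogonal_eq_bot (isClosed_map_adjoint hF hW hV.1 hV.2.2)
    (orthogonal_map_adjoint_eq_bot hF hW hV.2.2 hV.2.1)

theorem map_T1t_eq_top {V : Submodule ℂ T0t†.domain}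
    (hV : VBC T0 T0t hW (V : Set T0t†.domain)) :
    (iorthSubmodule hW V).map (T1t T0 T0t hW) = ⊤ :=
  Submodule.eq_top_of_isClosed_of_orthogonal_eq_bot (isClosed_map_T1t hF hW hV.2.1)
    (orthogonal_map_T1t_eq_bot hF hW hV.1 hV.2.2)

end Surjectivity

/-- Theorem 2.6(a): if `V` satisfies the (V)-boundary conditions, then `V` is
maximal non-negative and `V^[⊥]` is maximal non-positive in `(W, [·|·])`. -/
theorem VBC_implies_maximal_nonneg
    (T0 T0t : H →ₗ.[ℂ] H) (lam mu : ℝ) (hF : IsFriedrichsPair T0 T0t lam mu)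
    (hW : T0t.adjoint.domain = T0.adjoint.domain)
    (V : Submodule ℂ ↥T0t.adjoint.domain) (hV : VBC T0 T0t hW (V : Set ↥T0t.adjoint.domain)) :
    ((V : Set ↥T0t.adjoint.domain) ⊆ Wplus T0 T0t hW ∧
      ∀ U : Submodule ℂ ↥T0t.adjoint.domain,
        (U : Set ↥T0t.adjoint.domain) ⊆ Wplus T0 T0t hW → (V : Set ↥T0t.adjoint.domain) ⊆ (U : Set ↥T0t.adjoint.domain) →
        (U : Set ↥T0t.adjoint.domain) = (V : Set ↥T0t.adjoint.domain)) ∧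
    (iorth T0 T0t hW (V : Set ↥T0t.adjoint.domain) ⊆ Wminus T0 T0t hW ∧
      ∀ U : Submodule ℂ ↥T0t.adjoint.domain,
        (U : Set ↥T0t.adjoint.domain) ⊆ Wminus T0 T0t hW → iorth T0 T0t hW (V : Set ↥T0t.adjoint.domain) ⊆ (U : Set ↥T0t.adjoint.domain) →
        (U : Set ↥T0t.adjoint.domain) = iorth T0 T0t hW (V : Set ↥T0t.adjoint.domain)) := by
  refine ⟨⟨hV.1, fun U hU hVU => ?_⟩, hV.2.1, fun U hU hVU => ?_⟩
  · refine congrArg SetLike.coe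
      (Submodule.eq_of_le_of_map_le_of_disjoint_ker T0t†.toFun hVU ?_ ?_)
    · exact (map_adjoint_eq_top hF hW hV).symm ▸ le_top
    · exact Submodule.disjoint_def.mpr fun u hu =>
        eq_zero_of_mem_Wplus_of_adjoint_eq_zero hF hW (hU hu)
  · refine congrArg SetLike.coe (Submodule.eq_of_le_of_map_le_of_disjoint_ker
      (V := iorthSubmodule hW V) (T1t T0 T0t hW) hVU ?_ ?_)
    · exact (map_T1t_eq_top hF hW hV).symm ▸ le_top
    · exact Submodule.disjoint_def.mpr fun u hu =>
        eq_zero_of_mem_Wminus_of_T1t_eq_zero hF hW (hU hu)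
end
end
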